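/- arXiv:2011.02734 — 11 statements merged into one kernel-verified Lean document; each statement's English description precedes it below -/
import Mathlib

section
/- If C is a distance-coherent flag code of type (t_1,…,t_r) on 𝔽_q^n, then the minimum distance of C equals the sum of the minimum distances of its projected codes: d_f(C) = Σ_{i=1}^r d_S(C_i). -/
open Module

/-- The subspace distance between two subspaces of `𝔽_q^n`:
`d_S(U,V) = dim(U+V) - dim(U∩V)`. -/
noncomputable def subDist {K : Type*} [Field K] {n : ℕ}
    (U V : Submodule K (Fin n → K)) : ℕ :=
  finrank K ↥(U ⊔ V) - finrank K ↥(U ⊓ V)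

/-- The flag distance: `d_f(F,F') = Σ_i d_S(F_i, F'_i)`. -/
noncomputable def flagDist {K : Type*} [Field K] {n r : ℕ}
    (F F' : Fin r → Submodule K (Fin n → K)) : ℕ :=
  ∑ i, subDist (F i) (F' i)

/-- `t` is an admissible type vector: `1 ≤ t 1 < t 2 < … < t r < n`. -/
def IsTypeVector {r : ℕ} (n : ℕ) (t : Fin r → ℕ) : Prop :=
  StrictMono t ∧ ∀ i, 1 ≤ t i ∧ t i < n

/-- A flag of type `t` on `𝔽_q^n`: a nested sequence of subspaces with
`dim(F_i) = t_i`. -/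
def IsFlagOfType {K : Type*} [Field K] {n r : ℕ} (t : Fin r → ℕ)
    (F : Fin r → Submodule K (Fin n → K)) : Prop :=
  Monotone F ∧ ∀ i, finrank K ↥(F i) = t i

/-- A flag code of type `t`: a nonempty set of flags of type `t`. -/
def IsFlagCode {K : Type*} [Field K] {n r : ℕ} (t : Fin r → ℕ)
    (C : Set (Fin r → Submodule K (Fin n → K))) : Prop :=
  C.Nonempty ∧ ∀ F ∈ C, IsFlagOfType t F

/-- Minimum (subspace) distance of a set of subspaces; `0` if there is no
pair of distinct elements. -/
noncomputable def minSubDist {K : Type*} [Field K] {n : ℕ}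
    (D : Set (Submodule K (Fin n → K))) : ℕ :=
  sInf {d | ∃ U ∈ D, ∃ V ∈ D, U ≠ V ∧ d = subDist U V}

/-- Minimum (flag) distance of a flag code; `0` if there is no pair of
distinct elements. -/
noncomputable def minFlagDist {K : Type*} [Field K] {n r : ℕ}
    (C : Set (Fin r → Submodule K (Fin n → K))) : ℕ :=
  sInf {d | ∃ F ∈ C, ∃ F' ∈ C, F ≠ F' ∧ d = flagDist F F'}

/-- The `i`-th projected code of a flag code. -/
def projCode {K : Type*} [Field K] {n r : ℕ}
    (C : Set (Fin r → Submodule K (Fin n → K))) (i : Fin r) :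
    Set (Submodule K (Fin n → K)) :=
  (fun F => F i) '' C

/-- A flag code is disjoint (cardinality-coherent) if `|C| = |C_i|` for all `i`. -/
def IsDisjointFlagCode {K : Type*} [Field K] {n r : ℕ}
    (C : Set (Fin r → Submodule K (Fin n → K))) : Prop :=
  ∀ i, (projCode C i).ncard = C.ncard

/-- A flag code is distance-coherent if a pair of distinct flags attains the
minimum distance iff each pair of subspaces attains the minimum distance of
the corresponding projected code. -/
def DistanceCoherent {K : Type*} [Field K] {n r : ℕ}
    (C : Set (Fin r → Submodule K (Fin n → K))) : Prop :=
  ∀ F ∈ C, ∀ F' ∈ C, F ≠ F' →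
    (flagDist F F' = minFlagDist C ↔
      ∀ i, subDist (F i) (F' i) = minSubDist (projCode C i))

/-- A flag code is coherent if it is disjoint and distance-coherent. -/
def CoherentFlagCode {K : Type*} [Field K] {n r : ℕ}
    (C : Set (Fin r → Submodule K (Fin n → K))) : Prop :=
  IsDisjointFlagCode C ∧ DistanceCoherent C

/-- An equidistant flag code: every pair of distinct flags attains the
minimum distance. -/
def EquidistantFlagCode {K : Type*} [Field K] {n r : ℕ}
    (C : Set (Fin r → Submodule K (Fin n → K))) : Prop :=
  ∀ F ∈ C, ∀ F' ∈ C, F ≠ F' → flagDist F F' = minFlagDist C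

/-- An equidistant (constant dimension) subspace code: `d_S(U,V)` takes the
same value for every pair of distinct elements. -/
def EquidistantSubCode {K : Type*} [Field K] {n : ℕ}
    (D : Set (Submodule K (Fin n → K))) : Prop :=
  ∀ U ∈ D, ∀ V ∈ D, U ≠ V → subDist U V = minSubDist D

/-- A projected-equidistant flag code: every projected code is equidistant. -/
def ProjectedEquidistant {K : Type*} [Field K] {n r : ℕ}
    (C : Set (Fin r → Submodule K (Fin n → K))) : Prop :=
  ∀ i, EquidistantSubCode (projCode C i)

/-- A sunflower subspace code of center `W`: `U ∩ V = W` for all pairs of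
distinct elements. -/
def SubSunflower {K : Type*} [Field K] {n : ℕ}
    (D : Set (Submodule K (Fin n → K))) (W : Submodule K (Fin n → K)) : Prop :=
  ∀ U ∈ D, ∀ V ∈ D, U ≠ V → U ⊓ V = W

/-- A sunflower flag code of center `Cc`: `F_i ∩ F'_i = Cc_i` for every pair
of distinct flags and every `i`. -/
def FlagSunflower {K : Type*} [Field K] {n r : ℕ}
    (C : Set (Fin r → Submodule K (Fin n → K)))
    (Cc : Fin r → Submodule K (Fin n → K)) : Prop :=
  ∀ F ∈ C, ∀ F' ∈ C, F ≠ F' → ∀ i, F i ⊓ F' i = Cc i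

theorem stmt0 {K : Type*} [Field K] [Fintype K] {n r : ℕ}
    (t : Fin r → ℕ) (ht : IsTypeVector n t)
    (C : Set (Fin r → Submodule K (Fin n → K))) (hC : IsFlagCode t C)
    (hdc : DistanceCoherent C) :
    minFlagDist C = ∑ i, minSubDist (projCode C i) := by
  by_cases hpair : ∃ F ∈ C, ∃ F' ∈ C, F ≠ F'
  · obtain ⟨F, hF, F', hF', hne⟩ := hpair
    have hne' : Set.Nonempty {d | ∃ F ∈ C, ∃ F' ∈ C, F ≠ F' ∧ d = flagDist F F'} :=
      ⟨flagDist F F', F, hF, F', hF', hne, rfl⟩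
    obtain ⟨G, hG, G', hG', hGne, hGd⟩ := Nat.sInf_mem hne'
    have hattain : flagDist G G' = minFlagDist C := hGd.symm
    have hall := (hdc G hG G' hG' hGne).mp hattain
    rw [← hattain, flagDist]
    exact Finset.sum_congr rfl fun i _ => hall i
  · push_neg at hpair
    have h1 : minFlagDist C = 0 := by
      have h : {d | ∃ F ∈ C, ∃ F' ∈ C, F ≠ F' ∧ d = flagDist F F'} = ∅ := by
        ext d; simp only [Set.mem_setOf_eq, Set.mem_empty_iff_false, iff_false]
        rintro ⟨F, hF, F', hF', hne, -⟩
        exact hne (hpair F hF F' hF')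
      rw [minFlagDist, h, Nat.sInf_empty]
    have h2 : ∀ i, minSubDist (projCode C i) = 0 := by
      intro i
      have h : {d | ∃ U ∈ projCode C i, ∃ V ∈ projCode C i, U ≠ V ∧ d = subDist U V} = ∅ := by
        ext d; simp only [Set.mem_setOf_eq, Set.mem_empty_iff_false, iff_false]
        rintro ⟨U, ⟨F, hF, rfl⟩, V, ⟨F', hF', rfl⟩, hne, -⟩
        exact hne (by rw [hpair F hF F' hF'])
      rw [minSubDist, h, Nat.sInf_empty]
    simp [h1, h2]
end

section
/- Let C be a disjoint flag code of type (t_1,…,t_r) on 𝔽_q^n. Then C is distance-coherent if and only if d_f(C) = Σ_{i=1}^r d_S(C_i). -/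
open Module

theorem stmt1 {K : Type*} [Field K] [Fintype K] {n r : ℕ}
    (t : Fin r → ℕ) (ht : IsTypeVector n t)
    (C : Set (Fin r → Submodule K (Fin n → K))) (hC : IsFlagCode t C)
    (hdisj : IsDisjointFlagCode C) :
    DistanceCoherent C ↔ minFlagDist C = ∑ i, minSubDist (projCode C i) := by
  classical
  haveI : Finite (Submodule K (Fin n → K)) :=
    Finite.of_injective (fun U => (U : Set (Fin n → K))) SetLike.coe_injective
  have hCfin : C.Finite := Set.toFinite C
  by_cases h2 : ∃ F ∈ C, ∃ F' ∈ C, F ≠ F'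
  · obtain ⟨F₀, hF₀, F₀', hF₀', hne₀⟩ := h2
    have hinj : ∀ i : Fin r, Set.InjOn (fun F => F i) C := fun i =>
      Set.injOn_of_ncard_image_eq (hdisj i) hCfin
    have hproj_ne : ∀ F ∈ C, ∀ F' ∈ C, F ≠ F' → ∀ i, F i ≠ F' i := by
      intro F hF F' hF' hne i h
      exact hne (hinj i hF hF' h)
    have hmin_le : ∀ F ∈ C, ∀ F' ∈ C, F ≠ F' → ∀ i,
        minSubDist (projCode C i) ≤ subDist (F i) (F' i) := by
      intro F hF F' hF' hne i
      exact Nat.sInf_le ⟨F i, ⟨F, hF, rfl⟩, F' i, ⟨F', hF', rfl⟩,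
        hproj_ne F hF F' hF' hne i, rfl⟩
    have hS : {d | ∃ F ∈ C, ∃ F' ∈ C, F ≠ F' ∧ d = flagDist F F'}.Nonempty :=
      ⟨flagDist F₀ F₀', F₀, hF₀, F₀', hF₀', hne₀, rfl⟩
    obtain ⟨G, hG, G', hG', hGne, hGd⟩ := Nat.sInf_mem hS
    constructor
    · intro hcoh
      have h1 : flagDist G G' = minFlagDist C := hGd.symm
      have h2 := (hcoh G hG G' hG' hGne).mp h1
      rw [← h1]
      unfold flagDist
      exact Finset.sum_congr rfl fun i _ => h2 i
    · intro heq F hF F' hF' hne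
      constructor
      · intro hfd
        have hle : ∀ i ∈ Finset.univ, minSubDist (projCode C i) ≤ subDist (F i) (F' i) :=
          fun i _ => hmin_le F hF F' hF' hne i
        have hsum : ∑ i, minSubDist (projCode C i) = ∑ i, subDist (F i) (F' i) := by
          rw [← hfd.trans heq]; rfl
        exact fun i => ((Finset.sum_eq_sum_iff_of_le hle).mp hsum i (Finset.mem_univ i)).symm
      · intro h
        rw [heq]
        unfold flagDist
        exact Finset.sum_congr rfl fun i _ => h i
  · push_neg at h2
    have hDC : DistanceCoherent C := by
      intro F hF F' hF' hne
      exact absurd (h2 F hF F' hF') hne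
    have hmf : minFlagDist C = 0 := by
      unfold minFlagDist
      convert Nat.sInf_empty
      ext d
      simp only [Set.mem_setOf_eq, Set.mem_empty_iff_false, iff_false]
      rintro ⟨F, hF, F', hF', hne, -⟩
      exact hne (h2 F hF F' hF')
    have hms : ∀ i, minSubDist (projCode C i) = 0 := by
      intro i
      unfold minSubDist
      convert Nat.sInf_empty
      ext d
      simp only [Set.mem_setOf_eq, Set.mem_empty_iff_false, iff_false]
      rintro ⟨U, ⟨F, hF, rfl⟩, V, ⟨F', hF', rfl⟩, hne, -⟩
      exact hne (by rw [h2 F hF F' hF'])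
    simp only [hDC, hmf, hms, Finset.sum_const_zero, true_iff]
end

section
/- Let C be a flag code of type (t_1,…,t_r) on 𝔽_q^n. Then C is coherent if and only if C is disjoint and d_f(C) = Σ_{i=1}^r d_S(C_i). -/
open Module

section Aux

variable {K : Type*} [Field K] [Fintype K] {n r : ℕ}

instance : Finite (Submodule K (Fin n → K)) :=
  Finite.of_injective (fun U => (U : Set (Fin n → K))) SetLike.coe_injective

/-- disjointness gives injectivity of the projections -/
lemma proj_ne_of_disjoint {C : Set (Fin r → Submodule K (Fin n → K))}
    (hd : IsDisjointFlagCode C) {F F' : Fin r → Submodule K (Fin n → K)}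
    (hF : F ∈ C) (hF' : F' ∈ C) (hne : F ≠ F') (i : Fin r) : F i ≠ F' i := by
  intro h
  have hinj : Set.InjOn (fun F => F i) C :=
    Set.injOn_of_ncard_image_eq (hd i) (Set.toFinite C)
  exact hne (hinj hF hF' h)

lemma minSubDist_le {D : Set (Submodule K (Fin n → K))}
    {U V : Submodule K (Fin n → K)} (hU : U ∈ D) (hV : V ∈ D) (hne : U ≠ V) :
    minSubDist D ≤ subDist U V :=
  Nat.sInf_le ⟨U, hU, V, hV, hne, rfl⟩

lemma minFlagDist_le {C : Set (Fin r → Submodule K (Fin n → K))}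
    {F F' : Fin r → Submodule K (Fin n → K)} (hF : F ∈ C) (hF' : F' ∈ C)
    (hne : F ≠ F') : minFlagDist C ≤ flagDist F F' :=
  Nat.sInf_le ⟨F, hF, F', hF', hne, rfl⟩

end Aux

theorem stmt2 {K : Type*} [Field K] [Fintype K] {n r : ℕ}
    (t : Fin r → ℕ) (ht : IsTypeVector n t)
    (C : Set (Fin r → Submodule K (Fin n → K))) (hC : IsFlagCode t C) :
    CoherentFlagCode C ↔
      (IsDisjointFlagCode C ∧ minFlagDist C = ∑ i, minSubDist (projCode C i)) := by
  by_cases hpair : ∃ F ∈ C, ∃ F' ∈ C, F ≠ F'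
  · constructor
    · rintro ⟨hd, hdc⟩
      refine ⟨hd, ?_⟩
      -- pick a minimizing pair
      have hne : {d | ∃ F ∈ C, ∃ F' ∈ C, F ≠ F' ∧ d = flagDist F F'}.Nonempty := by
        obtain ⟨F, hF, F', hF', hFF⟩ := hpair
        exact ⟨flagDist F F', F, hF, F', hF', hFF, rfl⟩
      obtain ⟨F, hF, F', hF', hFF, hd'⟩ := Nat.sInf_mem hne
      have hmin : flagDist F F' = minFlagDist C := hd'.symm
      have := (hdc F hF F' hF' hFF).mp hmin
      rw [← hmin, flagDist]
      exact Finset.sum_congr rfl fun i _ => this i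
    · rintro ⟨hd, hsum⟩
      refine ⟨hd, fun F hF F' hF' hFF => ?_⟩
      have hterm : ∀ i ∈ Finset.univ,
          minSubDist (projCode C i) ≤ subDist (F i) (F' i) := fun i _ =>
        minSubDist_le ⟨F, hF, rfl⟩ ⟨F', hF', rfl⟩
          (proj_ne_of_disjoint hd hF hF' hFF i)
      constructor
      · intro hmin
        have hsumeq : ∑ i, minSubDist (projCode C i) = ∑ i, subDist (F i) (F' i) := by
          rw [← flagDist, hmin, hsum]
        have := (Finset.sum_eq_sum_iff_of_le hterm).mp hsumeq
        exact fun i => (this i (Finset.mem_univ i)).symm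
      · intro h
        rw [flagDist]
        calc ∑ i, subDist (F i) (F' i) = ∑ i, minSubDist (projCode C i) :=
              Finset.sum_congr rfl fun i _ => h i
          _ = minFlagDist C := hsum.symm
  · -- no distinct pair: everything is trivial
    push_neg at hpair
    have hflag : minFlagDist C = 0 := by
      rw [minFlagDist]
      convert Nat.sInf_empty
      ext d
      simp only [Set.mem_setOf_eq, Set.mem_empty_iff_false, iff_false]
      rintro ⟨F, hF, F', hF', hFF, -⟩
      exact hFF (hpair F hF F' hF')
    have hsub : ∀ i, minSubDist (projCode C i) = 0 := by
      intro i
      rw [minSubDist]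
      convert Nat.sInf_empty
      ext d
      simp only [Set.mem_setOf_eq, Set.mem_empty_iff_false, iff_false]
      rintro ⟨U, ⟨F, hF, rfl⟩, V, ⟨F', hF', rfl⟩, hUV, -⟩
      exact hUV (by rw [hpair F hF F' hF'])
    constructor
    · rintro ⟨hd, -⟩
      refine ⟨hd, ?_⟩
      rw [hflag]
      simp [hsub]
    · rintro ⟨hd, -⟩
      exact ⟨hd, fun F hF F' hF' hFF => absurd (hpair F hF F' hF') hFF⟩
end

section
/- Let C be a projected-equidistant flag code of type (t_1,…,t_r) on 𝔽_q^n. If C is disjoint, then C is equidistant with d_f(C) = Σ_{i=1}^r d_S(C_i). -/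
open Module

theorem stmt4 {K : Type*} [Field K] [Fintype K] {n r : ℕ}
    (t : Fin r → ℕ) (ht : IsTypeVector n t)
    (C : Set (Fin r → Submodule K (Fin n → K))) (hC : IsFlagCode t C)
    (hpe : ProjectedEquidistant C) (hdisj : IsDisjointFlagCode C) :
    EquidistantFlagCode C ∧ minFlagDist C = ∑ i, minSubDist (projCode C i) := by
  classical
  haveI : Finite (Submodule K (Fin n → K)) :=
    Finite.of_injective (fun U => (U : Set (Fin n → K))) SetLike.coe_injective
  have hfin : C.Finite := Set.toFinite C
  have hinj : ∀ i : Fin r, Set.InjOn (fun F => F i) C := fun i =>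
    Set.injOn_of_ncard_image_eq (hdisj i) hfin
  have key : ∀ F ∈ C, ∀ F' ∈ C, F ≠ F' →
      flagDist F F' = ∑ i, minSubDist (projCode C i) := by
    intro F hF F' hF' hne
    unfold flagDist
    refine Finset.sum_congr rfl fun i _ => ?_
    refine hpe i (F i) ⟨F, hF, rfl⟩ (F' i) ⟨F', hF', rfl⟩ ?_
    intro h
    exact hne ((hinj i) hF hF' h)
  by_cases hpair : ∃ F ∈ C, ∃ F' ∈ C, F ≠ F'
  · obtain ⟨F, hF, F', hF', hne⟩ := hpair
    have hSet : {d | ∃ G ∈ C, ∃ G' ∈ C, G ≠ G' ∧ d = flagDist G G'}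
        = {∑ i, minSubDist (projCode C i)} := by
      ext d
      constructor
      · rintro ⟨G, hG, G', hG', hne', rfl⟩
        exact key G hG G' hG' hne'
      · rintro rfl
        exact ⟨F, hF, F', hF', hne, (key F hF F' hF' hne).symm⟩
    have hD : minFlagDist C = ∑ i, minSubDist (projCode C i) := by
      unfold minFlagDist
      rw [hSet, csInf_singleton]
    exact ⟨fun G hG G' hG' hne' => by rw [key G hG G' hG' hne', hD], hD⟩
  · push_neg at hpair
    have h1 : minFlagDist C = 0 := by
      unfold minFlagDist
      have : {d | ∃ F ∈ C, ∃ F' ∈ C, F ≠ F' ∧ d = flagDist F F'} = ∅ := by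
        ext d
        simp only [Set.mem_setOf_eq, Set.mem_empty_iff_false, iff_false]
        rintro ⟨F, hF, F', hF', hne, -⟩
        exact hne (hpair F hF F' hF')
      rw [this, Nat.sInf_empty]
    have h2 : ∀ i, minSubDist (projCode C i) = 0 := by
      intro i
      unfold minSubDist
      have : {d | ∃ U ∈ projCode C i, ∃ V ∈ projCode C i, U ≠ V ∧ d = subDist U V} = ∅ := by
        ext d
        simp only [Set.mem_setOf_eq, Set.mem_empty_iff_false, iff_false]
        rintro ⟨U, ⟨F, hF, rfl⟩, V, ⟨F', hF', rfl⟩, hne, -⟩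
        exact hne (by rw [hpair F hF F' hF'])
      rw [this, Nat.sInf_empty]
    refine ⟨fun G hG G' hG' hne' => absurd (hpair G hG G' hG') hne', ?_⟩
    rw [h1]
    exact (Finset.sum_eq_zero fun i _ => h2 i).symm
end

section
/- Let C be a coherent flag code of type (t_1,…,t_r) on 𝔽_q^n. Then C is equidistant if and only if C is projected-equidistant. -/
open Module

theorem stmt6 {K : Type*} [Field K] [Fintype K] {n r : ℕ}
    (t : Fin r → ℕ) (ht : IsTypeVector n t)
    (C : Set (Fin r → Submodule K (Fin n → K))) (hC : IsFlagCode t C)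
    (hcoh : CoherentFlagCode C) :
    EquidistantFlagCode C ↔ ProjectedEquidistant C := by
  have hfin : C.Finite := by
    have h1 : Finite (Submodule K (Fin n → K)) :=
      Finite.of_injective (fun U => (U : Set (Fin n → K))) SetLike.coe_injective
    exact Set.toFinite C
  constructor
  · intro heq i U hU V hV hUV
    obtain ⟨F, hF, rfl⟩ := hU
    obtain ⟨F', hF', rfl⟩ := hV
    have hne : F ≠ F' := fun h => hUV (by rw [h])
    exact ((hcoh.2 F hF F' hF' hne).mp (heq F hF F' hF' hne)) i
  · intro hpe F hF F' hF' hne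
    refine (hcoh.2 F hF F' hF' hne).mpr fun i => ?_
    have hinj : Set.InjOn (fun F => F i) C :=
      Set.injOn_of_ncard_image_eq (hcoh.1 i) hfin
    have hnei : F i ≠ F' i := fun h => hne (hinj hF hF' h)
    exact hpe i (F i) ⟨F, hF, rfl⟩ (F' i) ⟨F', hF', rfl⟩ hnei
end

section
/- Every optimum distance flag code is coherent. That is, if C is a flag code of type (t_1,…,t_r) on 𝔽_q^n with d_f(C) = 2(Σ_{t_i ≤ ⌊n/2⌋} t_i + Σ_{t_i > ⌊n/2⌋} (n − t_i)), then C is coherent. -/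
open Module

lemma subDist_le_bound {K : Type*} [Field K] {n : ℕ}
    (U V : Submodule K (Fin n → K)) {t : ℕ}
    (hU : finrank K ↥U = t) (hV : finrank K ↥V = t) :
    subDist U V ≤ 2 * (if t ≤ n / 2 then t else n - t) := by
  have h1 := Submodule.finrank_sup_add_finrank_inf_eq U V
  have h2 : finrank K ↥(U ⊔ V) ≤ n := by
    have h := Submodule.finrank_le (U ⊔ V)
    simpa using h
  rw [hU, hV] at h1
  unfold subDist
  split <;> omega

lemma subDist_self_eq_zero {K : Type*} [Field K] {n : ℕ}
    (U : Submodule K (Fin n → K)) : subDist U U = 0 := by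
  rw [subDist, sup_idem, inf_idem, Nat.sub_self]

theorem stmt7 {K : Type*} [Field K] [Fintype K] {n r : ℕ}
    (t : Fin r → ℕ) (ht : IsTypeVector n t)
    (C : Set (Fin r → Submodule K (Fin n → K))) (hC : IsFlagCode t C)
    (hd : minFlagDist C = 2 * ∑ i, (if t i ≤ n / 2 then t i else n - t i)) :
    CoherentFlagCode C := by
  obtain ⟨_, hflag⟩ := hC
  set g : Fin r → ℕ := fun i => 2 * (if t i ≤ n / 2 then t i else n - t i) with hg
  have hsumg : ∑ i, g i = minFlagDist C := by
    rw [hd, Finset.mul_sum]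
  have hgpos : ∀ i, 0 < g i := by
    intro i
    have h1 := (ht.2 i).1
    have h2 := (ht.2 i).2
    simp only [hg]
    split <;> omega
  have hkey : ∀ F ∈ C, ∀ F' ∈ C, F ≠ F' → ∀ i, subDist (F i) (F' i) = g i := by
    intro F hF F' hF' hne
    have hle : ∀ i ∈ Finset.univ, subDist (F i) (F' i) ≤ g i := fun i _ =>
      subDist_le_bound _ _ ((hflag F hF).2 i) ((hflag F' hF').2 i)
    have h1 : minFlagDist C ≤ flagDist F F' := Nat.sInf_le ⟨F, hF, F', hF', hne, rfl⟩
    have h2 : flagDist F F' ≤ ∑ i, g i := Finset.sum_le_sum hle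
    have hsum : ∑ i, subDist (F i) (F' i) = ∑ i, g i := by
      have h3 : flagDist F F' = ∑ i, subDist (F i) (F' i) := rfl
      omega
    intro i
    exact (Finset.sum_eq_sum_iff_of_le hle).mp hsum i (Finset.mem_univ i)
  have hinj : ∀ i, Set.InjOn (fun F => F i) C := by
    intro i F hF F' hF' heq
    by_contra hne
    have h := hkey F hF F' hF' hne i
    simp only at heq
    rw [heq, subDist_self_eq_zero] at h
    exact absurd h.symm (Nat.ne_of_gt (hgpos i))
  constructor
  · intro i
    exact Set.ncard_image_of_injOn (hinj i)
  · intro F hF F' hF' hne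
    have hFi : ∀ i, F i ≠ F' i := fun i h => hne (hinj i hF hF' h)
    have hL : flagDist F F' = minFlagDist C := by
      have : flagDist F F' = ∑ i, g i := Finset.sum_congr rfl fun i _ =>
        hkey F hF F' hF' hne i
      rw [this, hsumg]
    have hR : ∀ i, subDist (F i) (F' i) = minSubDist (projCode C i) := by
      intro i
      have hset : {d | ∃ U ∈ projCode C i, ∃ V ∈ projCode C i, U ≠ V ∧ d = subDist U V}
          = {g i} := by
        ext d
        constructor
        · rintro ⟨U, ⟨G, hG, rfl⟩, V, ⟨G', hG', rfl⟩, hUV, rfl⟩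
          have hGG' : G ≠ G' := fun h => hUV (by rw [h])
          exact hkey G hG G' hG' hGG' i
        · rintro rfl
          exact ⟨F i, ⟨F, hF, rfl⟩, F' i, ⟨F', hF', rfl⟩, hFi i,
            (hkey F hF F' hF' hne i).symm⟩
      have : minSubDist (projCode C i) = g i := by
        unfold minSubDist
        rw [hset]
        exact csInf_singleton _
      rw [this]
      exact hkey F hF F' hF' hne i
    exact iff_of_true hL hR
end

section
/- Let C be a disjoint (cardinality-coherent) flag code of type (t_1,…,t_r) on 𝔽_q^n and let C_1,…,C_r be subspaces of 𝔽_q^n. Then C is a sunflower flag code of center (C_1,…,C_r) if and only if for every i = 1,…,r the projected code C_i is a sunflower of center C_i. -/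
open Module

theorem stmt9 {K : Type*} [Field K] [Fintype K] {n r : ℕ}
    (t : Fin r → ℕ) (ht : IsTypeVector n t)
    (C : Set (Fin r → Submodule K (Fin n → K))) (hC : IsFlagCode t C)
    (hdisj : IsDisjointFlagCode C) (Cc : Fin r → Submodule K (Fin n → K)) :
    FlagSunflower C Cc ↔ ∀ i, SubSunflower (projCode C i) (Cc i) := by

  constructor
  · intro h i U hU V hV hUV
    obtain ⟨F, hF, rfl⟩ := hU
    obtain ⟨F', hF', rfl⟩ := hV
    exact h F hF F' hF' (fun e => hUV (by rw [e])) i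
  · intro h F hF F' hF' hne i
    have hfin : C.Finite := Set.toFinite C
    have hinj : Set.InjOn (fun F => F i) C :=
      Set.injOn_of_ncard_image_eq (hdisj i) hfin
    have hne' : F i ≠ F' i := fun e => hne (hinj hF hF' e)
    exact h i (F i) ⟨F, hF, rfl⟩ (F' i) ⟨F', hF', rfl⟩ hne'
end

section
/- Let C be a disjoint (cardinality-coherent) sunflower flag code of type (t_1,…,t_r) on 𝔽_q^n with center (C_1,…,C_r). Then C is coherent, and for every pair of distinct flags F, F' ∈ C attaining d_f(F,F') = d_f(C) one has F_i ∩ F'_i = C_i for all i (i.e., the minimum distance intersection code of C is {(C_1,…,C_r)}). -/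
open Module

/-! In a sunflower flag code whose flags all have type `t`, any two distinct flags `F, F'` satisfy
`F_i ∩ F'_i = C_i`, so `d_S(F_i, F'_i) = 2 t_i - 2 dim C_i` does not depend on the pair. Hence the
code and all its projected codes are equidistant, every pair attains every minimum distance, and
distance-coherence holds trivially. -/

theorem Nat.sInf_eq_of_forall_eq {S : Set ℕ} {c : ℕ} (h : ∀ d ∈ S, d = c)
    (hc : S.Nonempty ∨ c = 0) : sInf S = c := by
  rcases S.eq_empty_or_nonempty with rfl | hS
  · simpa [eq_comm] using hc
  · rw [(hS.subset_singleton_iff.mp h), csInf_singleton]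

section

variable {K : Type*} [Field K] {n r : ℕ}

theorem subDist_self (U : Submodule K (Fin n → K)) : subDist U U = 0 := by
  rw [subDist, sup_idem, inf_idem, Nat.sub_self]

theorem subDist_eq_of_inf_eq {U V W : Submodule K (Fin n → K)} (h : U ⊓ V = W) :
    subDist U V = finrank K U + finrank K V - 2 * finrank K W := by
  have hsum := Submodule.finrank_sup_add_finrank_inf_eq U V
  rw [h] at hsum
  rw [subDist, h]
  omega

namespace FlagSunflower

variable {t : Fin r → ℕ} {C : Set (Fin r → Submodule K (Fin n → K))}
  {Cc : Fin r → Submodule K (Fin n → K)}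

theorem subDist_eq (hsun : FlagSunflower C Cc) (hdim : ∀ F ∈ C, ∀ i, finrank K (F i) = t i)
    {F F' : Fin r → Submodule K (Fin n → K)} (hF : F ∈ C) (hF' : F' ∈ C) (hne : F ≠ F')
    (i : Fin r) : subDist (F i) (F' i) = t i + t i - 2 * finrank K (Cc i) := by
  rw [subDist_eq_of_inf_eq (hsun F hF F' hF' hne i), hdim F hF i, hdim F' hF' i]

theorem flagDist_eq (hsun : FlagSunflower C Cc) (hdim : ∀ F ∈ C, ∀ i, finrank K (F i) = t i)
    {F F' : Fin r → Submodule K (Fin n → K)} (hF : F ∈ C) (hF' : F' ∈ C) (hne : F ≠ F') :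
    flagDist F F' = ∑ i, (t i + t i - 2 * finrank K (Cc i)) :=
  Finset.sum_congr rfl fun i _ => hsun.subDist_eq hdim hF hF' hne i

theorem minFlagDist_eq (hsun : FlagSunflower C Cc) (hdim : ∀ F ∈ C, ∀ i, finrank K (F i) = t i)
    {F F' : Fin r → Submodule K (Fin n → K)} (hF : F ∈ C) (hF' : F' ∈ C) (hne : F ≠ F') :
    minFlagDist C = ∑ i, (t i + t i - 2 * finrank K (Cc i)) := by
  refine Nat.sInf_eq_of_forall_eq ?_ (.inl ⟨_, F, hF, F', hF', hne, rfl⟩)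
  rintro d ⟨G, hG, G', hG', hGG', rfl⟩
  exact hsun.flagDist_eq hdim hG hG' hGG'

theorem minSubDist_projCode_eq (hsun : FlagSunflower C Cc)
    (hdim : ∀ F ∈ C, ∀ i, finrank K (F i) = t i)
    {F F' : Fin r → Submodule K (Fin n → K)} (hF : F ∈ C) (hF' : F' ∈ C) (hne : F ≠ F')
    (i : Fin r) : minSubDist (projCode C i) = t i + t i - 2 * finrank K (Cc i) := by
  refine Nat.sInf_eq_of_forall_eq ?_ ?_
  · rintro d ⟨_, ⟨G, hG, rfl⟩, _, ⟨G', hG', rfl⟩, hGG', rfl⟩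
    exact hsun.subDist_eq hdim hG hG' (fun h => hGG' (congrFun h i)) i
  · by_cases hi : F i = F' i
    -- then `Cc i = F i`, so the common distance is `0`, the value `sInf ∅` of a one-point code
    · right
      rw [← hsun.subDist_eq hdim hF hF' hne i, hi, subDist_self]
    · exact .inl ⟨_, F i, ⟨F, hF, rfl⟩, F' i, ⟨F', hF', rfl⟩, hi, rfl⟩

end FlagSunflower

end

theorem stmt10_general {K : Type*} [Field K] {n r : ℕ}
    (t : Fin r → ℕ)
    (C : Set (Fin r → Submodule K (Fin n → K))) (hC : IsFlagCode t C)
    (hdisj : IsDisjointFlagCode C) (Cc : Fin r → Submodule K (Fin n → K))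
    (hsun : FlagSunflower C Cc) :
    CoherentFlagCode C ∧
      ∀ F ∈ C, ∀ F' ∈ C, F ≠ F' → flagDist F F' = minFlagDist C →
        ∀ i, F i ⊓ F' i = Cc i := by
  have hdim : ∀ F ∈ C, ∀ i, finrank K (F i) = t i := fun F hF => (hC.2 F hF).2
  refine ⟨⟨hdisj, fun F hF F' hF' hne => iff_of_true ?_ fun i => ?_⟩,
    fun F hF F' hF' hne _ => hsun F hF F' hF' hne⟩
  · rw [hsun.flagDist_eq hdim hF hF' hne, hsun.minFlagDist_eq hdim hF hF' hne]
  · rw [hsun.subDist_eq hdim hF hF' hne, hsun.minSubDist_projCode_eq hdim hF hF' hne]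

theorem stmt10 {K : Type*} [Field K] [Fintype K] {n r : ℕ}
    (t : Fin r → ℕ) (ht : IsTypeVector n t)
    (C : Set (Fin r → Submodule K (Fin n → K))) (hC : IsFlagCode t C)
    (hdisj : IsDisjointFlagCode C) (Cc : Fin r → Submodule K (Fin n → K))
    (hsun : FlagSunflower C Cc) :
    CoherentFlagCode C ∧
      ∀ F ∈ C, ∀ F' ∈ C, F ≠ F' → flagDist F F' = minFlagDist C →
        ∀ i, F i ⊓ F' i = Cc i :=
  stmt10_general t C hC hdisj Cc hsun
end

section
/- Let C be a sunflower flag code of type (t_1,…,t_r) on 𝔽_q^n with center (C_1,…,C_r) and |C| ≥ 2. Then d_f(C) = 2 Σ_{i=1}^r (t_i − dim(C_i)); moreover, if C is disjoint, then d_S(C_i) = 2(t_i − dim(C_i)) for every i = 1,…,r. -/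
open Module

lemma subDist_eq {K : Type*} [Field K] [Fintype K] {n : ℕ}
    (U V : Submodule K (Fin n → K)) (tU : ℕ)
    (hU : finrank K ↥U = tU) (hV : finrank K ↥V = tU) :
    subDist U V = 2 * (tU - finrank K ↥(U ⊓ V)) := by
  have h := Submodule.finrank_sup_add_finrank_inf_eq U V
  have hle : finrank K ↥(U ⊓ V) ≤ tU := hU ▸ Submodule.finrank_mono inf_le_left
  unfold subDist
  omega

theorem stmt11 {K : Type*} [Field K] [Fintype K] {n r : ℕ}
    (t : Fin r → ℕ) (ht : IsTypeVector n t)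
    (C : Set (Fin r → Submodule K (Fin n → K))) (hC : IsFlagCode t C)
    (Cc : Fin r → Submodule K (Fin n → K)) (hsun : FlagSunflower C Cc)
    (hcard : 2 ≤ C.ncard) :
    minFlagDist C = 2 * ∑ i, (t i - finrank K ↥(Cc i)) ∧
      (IsDisjointFlagCode C →
        ∀ i, minSubDist (projCode C i) = 2 * (t i - finrank K ↥(Cc i))) := by
  -- finrank of Cc i ≤ t i will come from sunflower
  have hfin : C.Finite := by
    by_contra h
    rw [Set.Infinite.ncard h] at hcard; omega
  obtain ⟨F0, hF0, F1, hF1, hne⟩ := (Set.one_lt_ncard hfin).mp (by omega)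
  have key : ∀ F ∈ C, ∀ F' ∈ C, F ≠ F' → ∀ i,
      subDist (F i) (F' i) = 2 * (t i - finrank K ↥(Cc i)) := by
    intro F hF F' hF' hne i
    rw [← hsun F hF F' hF' hne i]
    exact subDist_eq _ _ (t i) ((hC.2 F hF).2 i) ((hC.2 F' hF').2 i)
  constructor
  · have hset : {d | ∃ F ∈ C, ∃ F' ∈ C, F ≠ F' ∧ d = flagDist F F'}
        = {2 * ∑ i, (t i - finrank K ↥(Cc i))} := by
      ext d
      simp only [Set.mem_setOf_eq, Set.mem_singleton_iff]
      constructor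
      · rintro ⟨F, hF, F', hF', hne, rfl⟩
        rw [flagDist, Finset.mul_sum]
        exact Finset.sum_congr rfl fun i _ => key F hF F' hF' hne i
      · rintro rfl
        refine ⟨F0, hF0, F1, hF1, hne, ?_⟩
        rw [flagDist, Finset.mul_sum]
        exact (Finset.sum_congr rfl fun i _ => key F0 hF0 F1 hF1 hne i).symm
    rw [minFlagDist, hset, csInf_singleton]
  · intro hdisj i
    have hpc : 2 ≤ (projCode C i).ncard := by rw [hdisj i]; exact hcard
    have hpfin : (projCode C i).Finite := by
      by_contra h
      rw [Set.Infinite.ncard h] at hpc; omega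
    obtain ⟨U0, hU0, U1, hU1, hUne⟩ := (Set.one_lt_ncard hpfin).mp (by omega)
    have keyp : ∀ U ∈ projCode C i, ∀ V ∈ projCode C i, U ≠ V →
        subDist U V = 2 * (t i - finrank K ↥(Cc i)) := by
      rintro _ ⟨F, hF, rfl⟩ _ ⟨F', hF', rfl⟩ hUV
      exact key F hF F' hF' (fun h => hUV (by rw [h])) i
    have hset : {d | ∃ U ∈ projCode C i, ∃ V ∈ projCode C i, U ≠ V ∧ d = subDist U V}
        = {2 * (t i - finrank K ↥(Cc i))} := by
      ext d
      simp only [Set.mem_setOf_eq, Set.mem_singleton_iff]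
      constructor
      · rintro ⟨U, hU, V, hV, hUV, rfl⟩
        exact keyp U hU V hV hUV
      · rintro rfl
        exact ⟨U0, hU0, U1, hU1, hUne, (keyp U0 hU0 U1 hU1 hUne).symm⟩
    rw [minSubDist, hset, csInf_singleton]
end

section
/- Let C be a coherent flag code of type (t_1,…,t_r) on 𝔽_q^n with |C| ≥ 2, and set m_i = t_i − d_S(C_i)/2 for i = 1,…,r. Then 0 ≤ m_1 ≤ m_2 ≤ … ≤ m_r and m_i < t_i for every i = 1,…,r. -/
open Module

theorem stmt16 {K : Type*} [Field K] [Fintype K] {n r : ℕ}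
    (t : Fin r → ℕ) (ht : IsTypeVector n t)
    (C : Set (Fin r → Submodule K (Fin n → K))) (hC : IsFlagCode t C)
    (hcoh : CoherentFlagCode C) (hcard : 2 ≤ C.ncard) :
    Monotone (fun i => t i - minSubDist (projCode C i) / 2) ∧
      ∀ i, t i - minSubDist (projCode C i) / 2 < t i := by
  have hCfin : C.Finite := Set.finite_of_ncard_pos (by omega)
  -- For each i, minimum subspace distance is ≥ 2
  have hdim : ∀ i, ∀ U ∈ projCode C i, finrank K ↥U = t i := by
    rintro i U ⟨G, hG, rfl⟩
    exact (hC.2 G hG).2 i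
  have hd2 : ∀ i, 2 ≤ minSubDist (projCode C i) := by
    intro i
    have hfin : (projCode C i).Finite :=
      Set.finite_of_ncard_pos (by rw [hcoh.1 i]; omega)
    have h2 : 1 < (projCode C i).ncard := by rw [hcoh.1 i]; omega
    obtain ⟨U, hU, V, hV, hUV⟩ := (Set.one_lt_ncard hfin).mp h2
    have hne : {d | ∃ U ∈ projCode C i, ∃ V ∈ projCode C i, U ≠ V ∧ d = subDist U V}.Nonempty :=
      ⟨subDist U V, U, hU, V, hV, hUV, rfl⟩
    obtain ⟨U', hU', V', hV', hne', heq⟩ := Nat.sInf_mem hne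
    rw [minSubDist, heq]
    have h1 := Submodule.finrank_sup_add_finrank_inf_eq U' V'
    have hw : U' ⊓ V' < U' := by
      rcases lt_or_eq_of_le (inf_le_left : U' ⊓ V' ≤ U') with h | h
      · exact h
      · exfalso; apply hne'
        have hle : U' ≤ V' := by rw [← h]; exact inf_le_right
        exact Submodule.eq_of_le_of_finrank_eq hle (by rw [hdim i U' hU', hdim i V' hV'])
    have hwlt : finrank K ↥(U' ⊓ V') < finrank K ↥U' :=
      Submodule.finrank_lt_finrank_of_lt hw
    rw [hdim i U' hU'] at hwlt h1
    rw [hdim i V' hV'] at h1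
    unfold subDist
    omega
  -- get a pair of flags achieving the minimum flag distance
  have h2 : 1 < C.ncard := by omega
  obtain ⟨F, hF, F', hF', hFF'⟩ := (Set.one_lt_ncard hCfin).mp h2
  have hne : {d | ∃ F ∈ C, ∃ F' ∈ C, F ≠ F' ∧ d = flagDist F F'}.Nonempty :=
    ⟨flagDist F F', F, hF, F', hF', hFF', rfl⟩
  obtain ⟨G, hG, G', hG', hGG', hdeq⟩ := Nat.sInf_mem hne
  have hmin : flagDist G G' = minFlagDist C := hdeq.symm
  have hsub : ∀ i, subDist (G i) (G' i) = minSubDist (projCode C i) :=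
    (hcoh.2 G hG G' hG' hGG').mp hmin
  have hkey : ∀ i, t i - minSubDist (projCode C i) / 2 = finrank K ↥(G i ⊓ G' i) := by
    intro i
    have h1 := Submodule.finrank_sup_add_finrank_inf_eq (G i) (G' i)
    have hGi : finrank K ↥(G i) = t i := (hC.2 G hG).2 i
    have hG'i : finrank K ↥(G' i) = t i := (hC.2 G' hG').2 i
    have hwle : finrank K ↥(G i ⊓ G' i) ≤ finrank K ↥(G i) :=
      Submodule.finrank_mono inf_le_left
    have hs := hsub i
    unfold subDist at hs
    rw [hGi, hG'i] at h1
    rw [hGi] at hwle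
    omega
  constructor
  · intro i j hij
    simp only
    rw [hkey i, hkey j]
    exact Submodule.finrank_mono (inf_le_inf ((hC.2 G hG).1 hij) ((hC.2 G' hG').1 hij))
  · intro i
    have := hd2 i
    have := (ht.2 i).1
    omega
end

section
/- Let C be a coherent flag code of type (t_1,…,t_r) on 𝔽_q^n and let F, F' ∈ C be distinct flags. Then d_f(F,F') = d_f(C) if and only if dim(F_i ∩ F'_i) = m_i for every i = 1,…,r, where m_i = t_i − d_S(C_i)/2. -/
open Module

theorem stmt17 {K : Type*} [Field K] [Fintype K] {n r : ℕ}
    (t : Fin r → ℕ) (ht : IsTypeVector n t)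
    (C : Set (Fin r → Submodule K (Fin n → K))) (hC : IsFlagCode t C)
    (hcoh : CoherentFlagCode C)
    (F F' : Fin r → Submodule K (Fin n → K)) (hF : F ∈ C) (hF' : F' ∈ C)
    (hne : F ≠ F') :
    flagDist F F' = minFlagDist C ↔
      ∀ i, finrank K ↥(F i ⊓ F' i) = t i - minSubDist (projCode C i) / 2 := by

  classical
  obtain ⟨hdisj, hdc⟩ := hcoh
  have hFt := (hC.2 F hF).2
  have hF't := (hC.2 F' hF').2
  have hfinSub : Finite (Submodule K (Fin n → K)) :=
    Finite.of_injective (fun U : Submodule K (Fin n → K) => (U : Set (Fin n → K))) SetLike.coe_injective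
  have hCfin : C.Finite := Set.toFinite C
  -- components of distinct flags are distinct
  have hcomp : ∀ i, F i ≠ F' i := by
    intro i hEq
    have hinj : Set.InjOn (fun G => G i) C := by
      apply hCfin.injOn_of_encard_image_eq
      rw [hCfin.encard_eq_coe, (hCfin.image _).encard_eq_coe,
        ← Set.ncard_def, ← Set.ncard_def]
      exact_mod_cast hdisj i
    exact hne (hinj hF hF' hEq)
  -- key dimension formula
  have key : ∀ (U V : Submodule K (Fin n → K)) (ti : ℕ), finrank K ↥U = ti →
      finrank K ↥V = ti →
      subDist U V = 2 * ti - 2 * finrank K ↥(U ⊓ V) ∧ finrank K ↥(U ⊓ V) ≤ ti := by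
    intro U V ti hU hV
    have h1 : finrank K ↥(U ⊔ V) + finrank K ↥(U ⊓ V) = finrank K ↥U + finrank K ↥V :=
      Submodule.finrank_sup_add_finrank_inf_eq U V
    have h2 : finrank K ↥(U ⊓ V) ≤ finrank K ↥U :=
      Submodule.finrank_mono inf_le_left
    unfold subDist
    omega
  -- minSubDist facts: even and half ≤ t i
  have hmin : ∀ i, ∃ k ≤ t i, minSubDist (projCode C i) = 2 * t i - 2 * k := by
    intro i
    have hne' : {d | ∃ U ∈ projCode C i, ∃ V ∈ projCode C i, U ≠ V ∧ d = subDist U V}.Nonempty :=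
      ⟨subDist (F i) (F' i), F i, ⟨F, hF, rfl⟩, F' i, ⟨F', hF', rfl⟩, hcomp i, rfl⟩
    obtain ⟨U, ⟨G, hG, rfl⟩, V, ⟨G', hG', rfl⟩, hUV, hd⟩ := Nat.sInf_mem hne'
    refine ⟨finrank K ↥(G i ⊓ G' i), ?_, ?_⟩
    · exact ((key _ _ (t i) ((hC.2 G hG).2 i) ((hC.2 G' hG').2 i)).2)
    · rw [minSubDist, hd, (key _ _ (t i) ((hC.2 G hG).2 i) ((hC.2 G' hG').2 i)).1]
  rw [hdc F hF F' hF' hne]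
  constructor
  · intro h i
    obtain ⟨k, hk, hd⟩ := hmin i
    obtain ⟨heq, hle⟩ := key (F i) (F' i) (t i) (hFt i) (hF't i)
    have := h i
    omega
  · intro h i
    obtain ⟨k, hk, hd⟩ := hmin i
    obtain ⟨heq, hle⟩ := key (F i) (F' i) (t i) (hFt i) (hF't i)
    have := h i
    omega
end
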